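/- Let d ≥ 2, let ζ ⊂ ℤ^d be finite, and let ζ = ζ1 ∪ ζ2 = ζ1' ∪ ζ2' be two partitions of ζ into disjoint sets satisfying ζ2 ∩ ∂ζ ⊆ ζ2' ∩ ∂ζ. Fix an arbitrary assignment w of strictly positive real weights to the nearest-neighbor edges of ℤ^d. Then {z ∉ ζ : S_{ζ2}(z) < S_{ζ1}(z)} ⊆ {z ∉ ζ : S_{ζ2'}(z) < S_{ζ1'}(z)}; in particular, if the first set is infinite then so is the second. (This is the equal-rate, deterministic form of Lemma 1(a) of the paper.) -/

import Mathlib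

open MeasureTheory ProbabilityTheory
open scoped ENNReal

/-- Vertices of the lattice `ℤ^d`. -/
abbrev V (d : ℕ) := Fin d → ℤ

/-- Nearest-neighbor adjacency: `δ(x,y) = 1` with `δ(x,y) = ∑ i, |x i - y i|`. -/
def Adj {d : ℕ} (x y : V d) : Prop := (∑ i, |x i - y i|) = 1

lemma adj_symm {d : ℕ} : Symmetric (@Adj d) := by
  intro x y h
  unfold Adj at h ⊢
  rw [Finset.sum_congr rfl fun i _ => abs_sub_comm (y i) (x i)]
  exact h

/-- The set of nearest-neighbor edges, as unordered pairs. -/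
def EdgeSet (d : ℕ) : Set (Sym2 (V d)) := Sym2.fromRel (r := @Adj d) ⟨fun _ _ h => adj_symm h⟩

open Classical in
/-- From weights on edges, weights on ordered pairs of adjacent vertices
(`0` on non-adjacent pairs). -/
noncomputable def edgeWeight {d : ℕ} (ω : EdgeSet d → ℝ) (x y : V d) : ℝ :=
  if h : Adj x y then ω ⟨s(x, y), Sym2.fromRel_prop.mpr h⟩ else 0

/-- Passage time of a finite path: sum of weights of its edges. -/
def pathTime {d : ℕ} (w : V d → V d → ℝ) (p : List (V d)) : ℝ :=
  (List.zipWith w p p.tail).sum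

/-- A path starting in `src`, ending at `z`, whose vertices other than the
starting vertex avoid `avoid`. -/
def ValidPath {d : ℕ} (src avoid : Set (V d)) (z : V d) (p : List (V d)) : Prop :=
  p.Chain' Adj ∧ (∃ a ∈ src, p.head? = some a) ∧ p.getLast? = some z ∧
    ∀ v ∈ p.tail, v ∉ avoid

/-- First-passage time from `src` to `z`, over paths whose vertices other than the
starting vertex avoid `avoid`; `∞` if there is no such path. -/
noncomputable def T {d : ℕ} (w : V d → V d → ℝ) (src avoid : Set (V d)) (z : V d) : ℝ≥0∞ :=
  ⨅ (p : List (V d)) (_ : ValidPath src avoid z p), ENNReal.ofReal (pathTime w p)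

/-- Mutual unbounded growth: both `{z : T₁(z) < T₂(z)}` and `{z : T₂(z) < T₁(z)}`
are infinite. -/
def MutualUnbounded {d : ℕ} (ξ1 ξ2 : Set (V d)) (w : V d → V d → ℝ) : Prop :=
  {z : V d | z ∉ ξ1 ∪ ξ2 ∧ T w ξ1 (ξ1 ∪ ξ2) z < T w ξ2 (ξ1 ∪ ξ2) z}.Infinite ∧
  {z : V d | z ∉ ξ1 ∪ ξ2 ∧ T w ξ2 (ξ1 ∪ ξ2) z < T w ξ1 (ξ1 ∪ ξ2) z}.Infinite

/-- `ξ1` strangles `ξ2`: there is no infinite self-avoiding nearest-neighbor path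
starting at a vertex of `ξ2` and avoiding `ξ1`. -/
def Strangles {d : ℕ} (ξ1 ξ2 : Set (V d)) : Prop :=
  ¬ ∃ f : ℕ → V d, Function.Injective f ∧ (∀ n, Adj (f n) (f (n + 1))) ∧
      f 0 ∈ ξ2 ∧ ∀ n, f n ∉ ξ1

/-- A pair is fertile if neither set strangles the other. -/
def Fertile {d : ℕ} (ξ1 ξ2 : Set (V d)) : Prop :=
  ¬ Strangles ξ1 ξ2 ∧ ¬ Strangles ξ2 ξ1

/-- The family `W` is i.i.d. with exponential (rate 1) marginals. -/
def IsIIDExp1 {d : ℕ} {Ω : Type*} [MeasurableSpace Ω] (P : Measure Ω)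
    (W : Ω → EdgeSet d → ℝ) : Prop :=
  (∀ e : EdgeSet d, Measurable fun ω => W ω e) ∧
  (∀ e : EdgeSet d, Measure.map (fun ω => W ω e) P = expMeasure 1) ∧
  iIndepFun (fun e ω => W ω e) P

/-- The boundary of a set: its members having a nearest neighbor outside the set. -/
def bdry {d : ℕ} (η : Set (V d)) : Set (V d) := {x ∈ η | ∃ y ∉ η, Adj x y}

/-! A path from `σ ⊆ ζ` to a site outside `ζ` that avoids `ζ` after its start leaves `ζ` at its
first step, so it starts in `∂ζ`. Hence first-passage times from `σ` only see `σ ∩ ∂ζ` and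
decrease when `σ ∩ ∂ζ` grows. The hypothesis enlarges `ζ2 ∩ ∂ζ` to `ζ2' ∩ ∂ζ`, and passing to
complements in the two partitions it shrinks `ζ1 ∩ ∂ζ` to `ζ1' ∩ ∂ζ`. -/

lemma ValidPath.head_mem_bdry {d : ℕ} {σ ζ : Set (V d)} {z a : V d} {p : List (V d)}
    (hp : ValidPath σ ζ z p) (hz : z ∉ ζ) (ha : p.head? = some a) (haζ : a ∈ ζ) :
    a ∈ bdry ζ := by
  obtain ⟨hchain, -, hlast, htail⟩ := hp
  match p, ha with
  | [_], rfl => exact absurd (by simpa using hlast) (ne_of_mem_of_not_mem haζ hz)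
  | _ :: b :: _, rfl => exact ⟨haζ, b, htail b (by simp), (List.isChain_cons_cons.mp hchain).1⟩

lemma T_le_T_of_inter_bdry_subset {d : ℕ} (w : V d → V d → ℝ) {σ σ' ζ : Set (V d)} {z : V d}
    (hz : z ∉ ζ) (hσζ : σ ⊆ ζ) (h : σ ∩ bdry ζ ⊆ σ') :
    T w σ' ζ z ≤ T w σ ζ z := by
  refine le_iInf₂ fun p hp => iInf₂_le p ?_
  obtain ⟨hchain, ⟨a, ha, hhead⟩, hlast, htail⟩ := hp
  have hbd := ValidPath.head_mem_bdry ⟨hchain, ⟨a, ha, hhead⟩, hlast, htail⟩ hz hhead (hσζ ha)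
  exact ⟨hchain, ⟨a, h ⟨ha, hbd⟩, hhead⟩, hlast, htail⟩

lemma T_lt_T_of_inter_bdry_subset {d : ℕ} (w : V d → V d → ℝ) {σ₁ σ₂ τ₁ τ₂ ζ : Set (V d)}
    {z : V d} (hσ : σ₁ ∪ σ₂ = ζ) (hτ : τ₁ ∪ τ₂ = ζ) (hτdis : Disjoint τ₁ τ₂)
    (hbd : σ₂ ∩ bdry ζ ⊆ τ₂) (hz : z ∉ ζ) (hlt : T w σ₂ ζ z < T w σ₁ ζ z) :
    T w τ₂ ζ z < T w τ₁ ζ z := by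
  subst hσ
  have hτ₁ : τ₁ ∩ bdry (σ₁ ∪ σ₂) ⊆ σ₁ := by
    rintro x ⟨hxτ₁, hxb⟩
    exact hxb.1.resolve_right fun hxσ₂ => hτdis.ne_of_mem hxτ₁ (hbd ⟨hxσ₂, hxb⟩) rfl
  calc T w τ₂ _ z ≤ T w σ₂ _ z := T_le_T_of_inter_bdry_subset w hz Set.subset_union_right hbd
    _ < T w σ₁ _ z := hlt
    _ ≤ T w τ₁ _ z := T_le_T_of_inter_bdry_subset w hz (hτ ▸ Set.subset_union_left) hτ₁

theorem lemma_one_a_general {d : ℕ}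
    (ζ ζ1 ζ2 ζ1' ζ2' : Finset (V d))
    (hu : ζ1 ∪ ζ2 = ζ)
    (hu' : ζ1' ∪ ζ2' = ζ) (hdis' : Disjoint ζ1' ζ2')
    (hbd : (ζ2 : Set (V d)) ∩ bdry (ζ : Set (V d)) ⊆ (ζ2' : Set (V d)) ∩ bdry (ζ : Set (V d)))
    (w : V d → V d → ℝ) :
    {z : V d | z ∉ (ζ : Set (V d)) ∧
        T w (ζ2 : Set (V d)) (ζ : Set (V d)) z < T w (ζ1 : Set (V d)) (ζ : Set (V d)) z} ⊆
      {z : V d | z ∉ (ζ : Set (V d)) ∧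
        T w (ζ2' : Set (V d)) (ζ : Set (V d)) z < T w (ζ1' : Set (V d)) (ζ : Set (V d)) z} ∧
    ({z : V d | z ∉ (ζ : Set (V d)) ∧
        T w (ζ2 : Set (V d)) (ζ : Set (V d)) z < T w (ζ1 : Set (V d)) (ζ : Set (V d)) z}.Infinite →
      {z : V d | z ∉ (ζ : Set (V d)) ∧
        T w (ζ2' : Set (V d)) (ζ : Set (V d)) z < T w (ζ1' : Set (V d)) (ζ : Set (V d)) z}.Infinite) := by
  have key := fun z (hz : z ∉ (ζ : Set (V d))) =>
    T_lt_T_of_inter_bdry_subset (σ₁ := ζ1) (τ₁ := ζ1') w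
      (by rw [← hu, Finset.coe_union]) (by rw [← hu', Finset.coe_union])
      (Finset.disjoint_coe.mpr hdis') (fun x hx => (hbd hx).1) hz
  exact ⟨fun z hz => ⟨hz.1, key z hz.1 hz.2⟩, fun h => h.mono fun z hz => ⟨hz.1, key z hz.1 hz.2⟩⟩

/-- Lemma 1(a), deterministic equal-rate form: if `ζ2 ∩ ∂ζ ⊆ ζ2' ∩ ∂ζ` then every
site outside `ζ` captured strictly first from `ζ2` is also captured strictly first
from `ζ2'`; in particular infinitude of the first set implies that of the second. -/
theorem lemma_one_a {d : ℕ} (hd : 2 ≤ d)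
    (ζ ζ1 ζ2 ζ1' ζ2' : Finset (V d))
    (hu : ζ1 ∪ ζ2 = ζ) (hdis : Disjoint ζ1 ζ2)
    (hu' : ζ1' ∪ ζ2' = ζ) (hdis' : Disjoint ζ1' ζ2')
    (hbd : (ζ2 : Set (V d)) ∩ bdry (ζ : Set (V d)) ⊆ (ζ2' : Set (V d)) ∩ bdry (ζ : Set (V d)))
    (w : V d → V d → ℝ) (hsymm : ∀ x y, w x y = w y x)
    (hpos : ∀ x y, Adj x y → 0 < w x y) :
    {z : V d | z ∉ (ζ : Set (V d)) ∧
        T w (ζ2 : Set (V d)) (ζ : Set (V d)) z < T w (ζ1 : Set (V d)) (ζ : Set (V d)) z} ⊆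
      {z : V d | z ∉ (ζ : Set (V d)) ∧
        T w (ζ2' : Set (V d)) (ζ : Set (V d)) z < T w (ζ1' : Set (V d)) (ζ : Set (V d)) z} ∧
    ({z : V d | z ∉ (ζ : Set (V d)) ∧
        T w (ζ2 : Set (V d)) (ζ : Set (V d)) z < T w (ζ1 : Set (V d)) (ζ : Set (V d)) z}.Infinite →
      {z : V d | z ∉ (ζ : Set (V d)) ∧
        T w (ζ2' : Set (V d)) (ζ : Set (V d)) z < T w (ζ1' : Set (V d)) (ζ : Set (V d)) z}.Infinite) :=
  lemma_one_a_general ζ ζ1 ζ2 ζ1' ζ2' hu hu' hdis' hbd w
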